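/- Two distinct finite multisets of points in the open half-plane Δ (with the weight w strictly positive on Δ) have distinct persistence images: the map D ↦ ρ_D is injective on finite multisets in Δ. -/
import Mathlib


noncomputable def persImage (C p σ : ℝ) (D : Multiset (ℝ × ℝ)) : ℝ × ℝ → ℝ :=
  fun q => (D.map (fun v => Real.arctan (C * (v.2 - v.1) ^ p) *
    Real.exp (-((v.1 - q.1) ^ 2 + (v.2 - q.2) ^ 2) / (2 * σ ^ 2)))).sum

noncomputable def chiPI (c : ℝ × ℝ) : Multiplicative (ℝ × ℝ) →* ℝ where
  toFun q := Real.exp ((Multiplicative.toAdd q).1 * c.1 + (Multiplicative.toAdd q).2 * c.2)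
  map_one' := by simp
  map_mul' a b := by
    simp only [toAdd_mul, Prod.fst_add, Prod.snd_add, ← Real.exp_add]
    ring_nf

lemma chiPI_injective : Function.Injective chiPI := by
  intro c c' hcc
  have h1 := congrArg (fun f : Multiplicative (ℝ × ℝ) →* ℝ =>
    f (Multiplicative.ofAdd ((1 : ℝ), (0 : ℝ)))) hcc
  have h2 := congrArg (fun f : Multiplicative (ℝ × ℝ) →* ℝ =>
    f (Multiplicative.ofAdd ((0 : ℝ), (1 : ℝ)))) hcc
  simp only [chiPI, MonoidHom.coe_mk, OneHom.coe_mk, toAdd_ofAdd, Real.exp_eq_exp,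
    one_mul, zero_mul, add_zero, zero_add] at h1 h2
  exact Prod.ext h1 h2

theorem persImage_injective (C p σ : ℝ) (hC : 0 < C) (hp : 0 < p) (hσ : 0 < σ)
    (D D' : Multiset (ℝ × ℝ)) (hD : ∀ v ∈ D, v.1 < v.2) (hD' : ∀ v ∈ D', v.1 < v.2)
    (h : persImage C p σ D = persImage C p σ D') : D = D' := by
  classical
  set w : ℝ × ℝ → ℝ := fun c => Real.arctan (C * (c.2 - c.1) ^ p) with hw
  set K : ℝ × ℝ → ℝ := fun c => Real.exp (-(c.1 ^ 2 + c.2 ^ 2) / (2 * σ ^ 2)) with hK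
  set S : Finset (ℝ × ℝ) := (D + D').toFinset with hS
  have hσ2 : (σ : ℝ) ^ 2 ≠ 0 := by positivity
  -- express persImage as a sum over S with counts
  have hsum : ∀ (E : Multiset (ℝ × ℝ)), E.toFinset ⊆ S → ∀ q : ℝ × ℝ,
      persImage C p σ E q = ∑ c ∈ S, (E.count c : ℝ) *
        (w c * Real.exp (-((c.1 - q.1) ^ 2 + (c.2 - q.2) ^ 2) / (2 * σ ^ 2))) := by
    intro E hE q
    rw [persImage, Finset.sum_multiset_map_count]
    rw [Finset.sum_subset hE]
    · apply Finset.sum_congr rfl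
      intro c _
      rw [nsmul_eq_mul]
    · intro c _ hc
      rw [Multiset.count_eq_zero_of_notMem (by simpa using hc)]
      simp
  have hDsub : D.toFinset ⊆ S := by
    intro c hc
    simp only [hS, Multiset.mem_toFinset] at hc ⊢
    exact Multiset.mem_add.2 (Or.inl hc)
  have hD'sub : D'.toFinset ⊆ S := by
    intro c hc
    simp only [hS, Multiset.mem_toFinset] at hc ⊢
    exact Multiset.mem_add.2 (Or.inr hc)
  -- coefficients
  set a : ℝ × ℝ → ℝ := fun c => ((D.count c : ℝ) - (D'.count c : ℝ)) * (w c * K c) with ha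
  -- key: the character sum vanishes
  have hkey : ∀ r : ℝ × ℝ, ∑ c ∈ S, a c * chiPI c (Multiplicative.ofAdd r) = 0 := by
    intro r
    set q : ℝ × ℝ := (σ ^ 2 * r.1, σ ^ 2 * r.2) with hq
    have h0 : ∑ c ∈ S, ((D.count c : ℝ) - (D'.count c : ℝ)) *
        (w c * Real.exp (-((c.1 - q.1) ^ 2 + (c.2 - q.2) ^ 2) / (2 * σ ^ 2))) = 0 := by
      have h1 := hsum D hDsub q
      have h2 := hsum D' hD'sub q
      have heq : _ = _ := congrFun h q
      rw [h1, h2] at heq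
      calc ∑ c ∈ S, ((D.count c : ℝ) - (D'.count c : ℝ)) *
            (w c * Real.exp (-((c.1 - q.1) ^ 2 + (c.2 - q.2) ^ 2) / (2 * σ ^ 2)))
          = ∑ c ∈ S, ((D.count c : ℝ) *
            (w c * Real.exp (-((c.1 - q.1) ^ 2 + (c.2 - q.2) ^ 2) / (2 * σ ^ 2))) -
            (D'.count c : ℝ) *
            (w c * Real.exp (-((c.1 - q.1) ^ 2 + (c.2 - q.2) ^ 2) / (2 * σ ^ 2)))) := by
            apply Finset.sum_congr rfl; intro c _; ring
        _ = 0 := by rw [Finset.sum_sub_distrib]; rw [sub_eq_zero]; exact heq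
    have hfac : ∀ c : ℝ × ℝ,
        Real.exp (-((c.1 - q.1) ^ 2 + (c.2 - q.2) ^ 2) / (2 * σ ^ 2)) =
        K c * (Real.exp (-(q.1 ^ 2 + q.2 ^ 2) / (2 * σ ^ 2)) *
          Real.exp (r.1 * c.1 + r.2 * c.2)) := by
      intro c
      rw [hK]
      rw [← Real.exp_add, ← Real.exp_add, Real.exp_eq_exp, hq]
      field_simp
      ring
    have hEq : Real.exp (-(q.1 ^ 2 + q.2 ^ 2) / (2 * σ ^ 2)) ≠ 0 := Real.exp_ne_zero _
    have h3 : Real.exp (-(q.1 ^ 2 + q.2 ^ 2) / (2 * σ ^ 2)) *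
        (∑ c ∈ S, a c * chiPI c (Multiplicative.ofAdd r)) = 0 := by
      rw [Finset.mul_sum]
      rw [← h0]
      apply Finset.sum_congr rfl
      intro c _
      rw [hfac c, ha]
      simp only [chiPI, MonoidHom.coe_mk, OneHom.coe_mk, toAdd_ofAdd]
      ring
    exact (mul_eq_zero.1 h3).resolve_left hEq
  -- linear independence of characters
  have li : LinearIndependent ℝ (fun c : ℝ × ℝ => ⇑(chiPI c)) :=
    (linearIndependent_monoidHom (Multiplicative (ℝ × ℝ)) ℝ).comp chiPI chiPI_injective
  have hzero : ∀ c ∈ S, a c = 0 := by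
    have := linearIndependent_iff'.1 li S a ?_
    · exact this
    · funext q
      have hk := hkey (Multiplicative.toAdd q)
      simp only [ofAdd_toAdd] at hk
      simpa [Finset.sum_apply, smul_eq_mul] using hk
  -- positivity of weights on S
  have hwK : ∀ c ∈ S, w c * K c ≠ 0 := by
    intro c hc
    have hmem : c ∈ D + D' := Multiset.mem_toFinset.1 hc
    have hlt : c.1 < c.2 := by
      rcases Multiset.mem_add.1 hmem with hm | hm
      · exact hD c hm
      · exact hD' c hm
    have hwpos : 0 < w c := by
      rw [hw]
      have : (0:ℝ) < C * (c.2 - c.1) ^ p := mul_pos hC (Real.rpow_pos_of_pos (by linarith) p)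
      calc (0:ℝ) = Real.arctan 0 := Real.arctan_zero.symm
        _ < _ := Real.arctan_strictMono this
    have hKpos : 0 < K c := Real.exp_pos _
    positivity
  -- counts are equal
  have hcount : ∀ c : ℝ × ℝ, D.count c = D'.count c := by
    intro c
    by_cases hc : c ∈ S
    · have h0 := hzero c hc
      rw [ha] at h0
      have := (mul_eq_zero.1 h0).resolve_right (hwK c hc)
      have : (D.count c : ℝ) = (D'.count c : ℝ) := by linarith [sub_eq_zero.1 this]
      exact_mod_cast this
    · have : c ∉ D + D' := fun hm => hc (Multiset.mem_toFinset.2 hm)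
      rw [Multiset.count_eq_zero_of_notMem (fun hm => this (Multiset.mem_add.2 (Or.inl hm))),
        Multiset.count_eq_zero_of_notMem (fun hm => this (Multiset.mem_add.2 (Or.inr hm)))]
  exact Multiset.ext.2 hcount
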